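/- arXiv:1702.02342 — 3 statements merged into one kernel-verified Lean document; each statement's English description precedes it below -/
import Mathlib

section
/- The cyclic group ℤ/Nℤ is generated by three elements a, b, c of orders m, n, l respectively with a + b + c = 0 if and only if (i) N = lcm(m,n) = lcm(m,l) = lcm(n,l), and (ii) if N is even, then exactly one of the numbers N/m, N/n, N/l is even. -/
lemma zmod_closure_one (N : ℕ) [NeZero N] : AddSubgroup.closure {(1 : ZMod N)} = ⊤ := by
  rw [eq_top_iff]
  intro x _
  have hx : x.val • (1 : ZMod N) = x := by
    rw [nsmul_eq_mul, mul_one, ZMod.natCast_zmod_val]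
  exact hx ▸ AddSubgroup.nsmul_mem _ (AddSubgroup.subset_closure (Set.mem_singleton _)) x.val

lemma closure_pair_top {N : ℕ} [NeZero N] (a b : ZMod N) :
    AddSubgroup.closure {a, b} = ⊤ ↔ Nat.gcd N (Nat.gcd a.val b.val) = 1 := by
  constructor
  · intro h
    have h1 : (1 : ZMod N) ∈ AddSubgroup.closure {a, b} := h ▸ AddSubgroup.mem_top 1
    rw [AddSubgroup.mem_closure_pair] at h1
    obtain ⟨X, Y, hXY⟩ := h1
    have hz : ((X * a.val + Y * b.val - 1 : ℤ) : ZMod N) = 0 := by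
      push_cast
      rw [ZMod.natCast_zmod_val, ZMod.natCast_zmod_val, ← hXY]
      simp [zsmul_eq_mul]
    rw [ZMod.intCast_zmod_eq_zero_iff_dvd] at hz
    obtain ⟨t, ht⟩ := hz
    set g := Nat.gcd N (Nat.gcd a.val b.val) with hg
    have hgN : (g : ℤ) ∣ (N : ℤ) := Int.natCast_dvd_natCast.mpr (Nat.gcd_dvd_left _ _)
    have hga : (g : ℤ) ∣ (a.val : ℤ) :=
      Int.natCast_dvd_natCast.mpr ((Nat.gcd_dvd_right _ _).trans (Nat.gcd_dvd_left _ _))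
    have hgb : (g : ℤ) ∣ (b.val : ℤ) :=
      Int.natCast_dvd_natCast.mpr ((Nat.gcd_dvd_right _ _).trans (Nat.gcd_dvd_right _ _))
    have h1' : (1 : ℤ) = X * a.val + Y * b.val - N * t := by linarith [ht]
    have : (g : ℤ) ∣ 1 := by
      rw [h1']
      exact dvd_sub (dvd_add (Dvd.dvd.mul_left hga X) (Dvd.dvd.mul_left hgb Y))
        (Dvd.dvd.mul_right hgN t)
    exact Nat.dvd_one.mp (Int.ofNat_dvd.mp (by exact_mod_cast this))
  · intro hg
    set G := Nat.gcd a.val b.val with hG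
    have b1 := Nat.gcd_eq_gcd_ab N G
    have b2 := Nat.gcd_eq_gcd_ab a.val b.val
    rw [hg] at b1
    set A := Nat.gcdA N G
    set B := Nat.gcdB N G
    set C := Nat.gcdA a.val b.val
    set D := Nat.gcdB a.val b.val
    have hZ : (1 : ℤ) = N * A + (a.val * C + b.val * D) * B := by
      rw [← b2, ← hG]; exact_mod_cast b1
    have key : (C * B) • a + (D * B) • b = 1 := by
      have := congrArg (fun z : ℤ => (z : ZMod N)) hZ
      simp only [Int.cast_one, Int.cast_add, Int.cast_mul, Int.cast_natCast,
        ZMod.natCast_self, zero_mul, zero_add] at this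
      rw [zsmul_eq_mul, zsmul_eq_mul]
      push_cast
      rw [ZMod.natCast_zmod_val, ZMod.natCast_zmod_val] at this
      rw [this]; ring
    have h1 : (1 : ZMod N) ∈ AddSubgroup.closure {a, b} :=
      AddSubgroup.mem_closure_pair.mpr ⟨C * B, D * B, key⟩
    rw [eq_top_iff, ← zmod_closure_one N]
    exact (AddSubgroup.closure_le _).mpr (Set.singleton_subset_iff.mpr h1)

lemma gcd_val_eq (N : ℕ) [NeZero N] (x : ZMod N) :
    Nat.gcd N x.val = N / addOrderOf x := by
  have h : addOrderOf x = N / Nat.gcd N x.val := by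
    conv_lhs => rw [← ZMod.natCast_zmod_val x]
    exact ZMod.addOrderOf_coe _ (NeZero.ne N)
  rw [h, Nat.div_div_self (Nat.gcd_dvd_left _ _) (NeZero.ne N)]


lemma zmod_unit_iff {p e : ℕ} (hp : p.Prime) (he : e ≠ 0) (x : ZMod (p ^ e)) :
    IsUnit x ↔ ZMod.castHom (dvd_pow_self p he) (ZMod p) x ≠ 0 := by
  haveI : Fact p.Prime := ⟨hp⟩
  haveI : NeZero (p ^ e) := ⟨pow_ne_zero e hp.pos.ne'⟩
  conv_lhs => rw [← ZMod.natCast_zmod_val x]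
  rw [ZMod.isUnit_iff_coprime]
  have h1 : ZMod.castHom (dvd_pow_self p he) (ZMod p) x
      = ((x.val : ℕ) : ZMod p) := by
    conv_lhs => rw [← ZMod.natCast_zmod_val x]
    exact map_natCast _ _
  rw [h1, Ne, ZMod.natCast_eq_zero_iff]
  rw [Nat.coprime_pow_right_iff (Nat.pos_of_ne_zero he)]
  rw [Nat.coprime_comm, hp.coprime_iff_not_dvd]

lemma sum_two_units {p e : ℕ} (hp : p.Prime) (hp2 : p ≠ 2) (he : e ≠ 0) (x : ZMod (p ^ e)) :
    ∃ v w : ZMod (p ^ e), IsUnit v ∧ IsUnit w ∧ v + w = x := by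
  haveI : Fact p.Prime := ⟨hp⟩
  by_cases h : IsUnit (x - 1)
  · exact ⟨1, x - 1, isUnit_one, h, by ring⟩
  · refine ⟨2, x - 2, ?_, ?_, by ring⟩
    · rw [zmod_unit_iff hp he]
      have h2 : ((2 : ℕ) : ZMod p) ≠ 0 := by
        rw [Ne, ZMod.natCast_eq_zero_iff]
        intro hdvd
        exact hp2 ((Nat.prime_dvd_prime_iff_eq hp Nat.prime_two).mp hdvd)
      rw [show ((2 : ZMod (p ^ e))) = ((2 : ℕ) : ZMod (p ^ e)) by norm_cast, map_natCast]
      exact h2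
    · rw [zmod_unit_iff hp he] at h ⊢
      push_neg at h
      intro h2
      have hcontra : ZMod.castHom (dvd_pow_self p he) (ZMod p) ((x - 1) - (x - 2)) = 0 := by
        rw [map_sub, h, h2, sub_zero]
      rw [show (x - 1) - (x - 2) = (1 : ZMod (p ^ e)) by ring, map_one] at hcontra
      exact one_ne_zero hcontra

lemma base2 {e : ℕ} (he : e ≠ 0) (d : ℕ) (hdE : Even d) :
    ∃ u v w : ZMod (2 ^ e), IsUnit u ∧ IsUnit v ∧ IsUnit w ∧
      (d : ZMod (2 ^ e)) * u + v + w = 0 := by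
  refine ⟨1, 1, -(d : ZMod (2 ^ e)) - 1, isUnit_one, isUnit_one, ?_, by ring⟩
  rw [zmod_unit_iff Nat.prime_two he]
  have hd : ((d : ℕ) : ZMod 2) = 0 := by
    rw [ZMod.natCast_eq_zero_iff]
    exact hdE.two_dvd
  simp only [map_sub, map_neg, map_natCast, map_one, hd]
  decide

lemma baseodd {p e : ℕ} (hp : p.Prime) (hp2 : p ≠ 2) (he : e ≠ 0) (d : ℕ) :
    ∃ u v w : ZMod (p ^ e), IsUnit u ∧ IsUnit v ∧ IsUnit w ∧
      (d : ZMod (p ^ e)) * u + v + w = 0 := by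
  obtain ⟨v, w, hv, hw, hvw⟩ := sum_two_units hp hp2 he (-(d : ZMod (p ^ e)))
  exact ⟨1, v, w, isUnit_one, hv, hw, by linear_combination hvw⟩

lemma addOrderOf_mul_unit {N : ℕ} (x u : ZMod N) (hu : IsUnit u) :
    addOrderOf (x * u) = addOrderOf x := by
  have hinj : Function.Injective (AddMonoidHom.mulRight u : ZMod N →+ ZMod N) := by
    intro s t hst
    obtain ⟨U, rfl⟩ := hu
    simp only [AddMonoidHom.coe_mulRight] at hst
    have := congrArg (fun z => z * (↑U⁻¹ : ZMod N)) hst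
    simpa [mul_assoc] using this
  simpa using addOrderOf_injective (AddMonoidHom.mulRight u) hinj x

lemma lcm_eq_iff' {N m n : ℕ} (hN : 0 < N) (hm : m ∣ N) (hn : n ∣ N) :
    N = Nat.lcm m n ↔ Nat.Coprime (N / m) (N / n) := by
  have hm0 : 0 < m := Nat.pos_of_dvd_of_pos hm hN
  have hn0 : 0 < n := Nat.pos_of_dvd_of_pos hn hN
  constructor
  · intro hL
    set g := Nat.gcd (N / m) (N / n) with hgdef
    have hgm : g ∣ N / m := Nat.gcd_dvd_left _ _
    have hgn : g ∣ N / n := Nat.gcd_dvd_right _ _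
    have hgN : g ∣ N := hgm.trans (Nat.div_dvd_of_dvd hm)
    have hmg : m ∣ N / g := by
      rw [Nat.dvd_div_iff_mul_dvd hgN]
      calc g * m = m * g := mul_comm _ _
        _ ∣ m * (N / m) := Nat.mul_dvd_mul_left m hgm
        _ = N := Nat.mul_div_cancel' hm
    have hng : n ∣ N / g := by
      rw [Nat.dvd_div_iff_mul_dvd hgN]
      calc g * n = n * g := mul_comm _ _
        _ ∣ n * (N / n) := Nat.mul_dvd_mul_left n hgn
        _ = N := Nat.mul_div_cancel' hn
    have hNg : N ∣ N / g := by
      have hh := Nat.lcm_dvd hmg hng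
      rw [← hL] at hh
      exact hh
    have heq : N / g = N := Nat.dvd_antisymm (Nat.div_dvd_of_dvd hgN) hNg
    have hg1 : g = 1 := by
      have hdd := Nat.div_div_self hgN hN.ne'
      rw [heq, Nat.div_self hN] at hdd
      exact hdd.symm
    exact Nat.coprime_iff_gcd_eq_one.mpr hg1
  · intro hcop
    set L := Nat.lcm m n with hLdef
    have hLN : L ∣ N := Nat.lcm_dvd hm hn
    obtain ⟨k, hk⟩ : m ∣ L := Nat.dvd_lcm_left m n
    obtain ⟨t, ht⟩ := hLN
    have hNm : N / m = k * t := by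
      rw [ht, hk, mul_assoc, Nat.mul_div_cancel_left _ hm0]
    obtain ⟨k', hk'⟩ : n ∣ L := Nat.dvd_lcm_right m n
    have hNn : N / n = k' * t := by
      rw [ht, hk', mul_assoc, Nat.mul_div_cancel_left _ hn0]
    have htd : t ∣ Nat.gcd (N / m) (N / n) :=
      Nat.dvd_gcd (hNm ▸ Dvd.intro_left k rfl) (hNn ▸ Dvd.intro_left k' rfl)
    rw [Nat.Coprime] at hcop
    rw [hcop] at htd
    rw [ht, Nat.dvd_one.mp htd, mul_one]

lemma isUnit_pair {R S : Type*} [CommMonoid R] [CommMonoid S] {x : R} {y : S}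
    (hx : IsUnit x) (hy : IsUnit y) : IsUnit ((x, y) : R × S) := by
  obtain ⟨x', hx'⟩ := isUnit_iff_exists_inv.mp hx
  obtain ⟨y', hy'⟩ := isUnit_iff_exists_inv.mp hy
  exact isUnit_iff_exists_inv.mpr ⟨(x', y'), Prod.ext hx' hy'⟩

example {A B : Type*} [CommRing A] [CommRing B] (f : A ≃+* B) (d : ℕ) :
    f (d : A) = (d : B) := map_natCast f d

lemma core_units (M : ℕ) : 0 < M → ∀ d1 d2 d3 : ℕ, d1 ∣ M → d2 ∣ M → d3 ∣ M →
    Nat.Coprime d1 d2 → Nat.Coprime d1 d3 → Nat.Coprime d2 d3 →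
    (Even M → Even d1 ∨ Even d2 ∨ Even d3) →
    ∃ u v w : ZMod M, IsUnit u ∧ IsUnit v ∧ IsUnit w ∧
      (d1 : ZMod M) * u + (d2 : ZMod M) * v + (d3 : ZMod M) * w = 0 := by
  induction M using Nat.recOnPosPrimePosCoprime with
  | zero => intro h; exact absurd h (lt_irrefl 0)
  | one =>
    intro _ d1 d2 d3 _ _ _ _ _ _ _
    exact ⟨1, 1, 1, isUnit_one, isUnit_one, isUnit_one, Subsingleton.elim _ _⟩
  | prime_pow p e hpp hepos =>
    intro _ d1 d2 d3 h1 h2 h3 c12 c13 c23 hev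
    have he : e ≠ 0 := hepos.ne'
    have key : ∀ d : ℕ, d ∣ p ^ e → d ≠ 1 → p ∣ d := by
      intro d hd hd1
      obtain ⟨k, hk, rfl⟩ := (Nat.dvd_prime_pow hpp).mp hd
      cases k with
      | zero => simp at hd1
      | succ k => exact dvd_pow_self p (Nat.succ_ne_zero k)
    have hpair : ∀ x y : ℕ, x ∣ p ^ e → y ∣ p ^ e → Nat.Coprime x y → x = 1 ∨ y = 1 := by
      intro x y hx hy hc
      by_contra hcon
      push_neg at hcon
      have hx' := key x hx hcon.1
      have hy' := key y hy hcon.2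
      have hg : Nat.gcd x y = 1 := hc
      have : p ∣ 1 := hg ▸ Nat.dvd_gcd hx' hy'
      exact Nat.Prime.one_lt hpp |>.ne' (Nat.dvd_one.mp this)
    have hcases : (d2 = 1 ∧ d3 = 1) ∨ (d1 = 1 ∧ d3 = 1) ∨ (d1 = 1 ∧ d2 = 1) := by
      rcases hpair d1 d2 h1 h2 c12 with h | h
      · rcases hpair d2 d3 h2 h3 c23 with h' | h'
        · exact Or.inr (Or.inr ⟨h, h'⟩)
        · exact Or.inr (Or.inl ⟨h, h'⟩)
      · rcases hpair d1 d3 h1 h3 c13 with h' | h'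
        · exact Or.inr (Or.inr ⟨h', h⟩)
        · exact Or.inl ⟨h, h'⟩
    by_cases hp2 : p = 2
    · subst hp2
      have hevenM : Even (2 ^ e) := even_iff_two_dvd.mpr (dvd_pow_self 2 he)
      rcases hev hevenM with hE | hE | hE
      · have hd23 : d2 = 1 ∧ d3 = 1 := by
          rcases hcases with h | h | h
          · exact h
          · exact absurd (h.1 ▸ hE) (by decide)
          · exact absurd (h.1 ▸ hE) (by decide)
        obtain ⟨u, v, w, hu, hv, hw, heq⟩ := base2 he d1 hE
        exact ⟨u, v, w, hu, hv, hw, by rw [hd23.1, hd23.2]; push_cast; linear_combination heq⟩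
      · have hd13 : d1 = 1 ∧ d3 = 1 := by
          rcases hcases with h | h | h
          · exact absurd (h.1 ▸ hE) (by decide)
          · exact h
          · exact absurd (h.2 ▸ hE) (by decide)
        obtain ⟨u, v, w, hu, hv, hw, heq⟩ := base2 he d2 hE
        exact ⟨v, u, w, hv, hu, hw, by rw [hd13.1, hd13.2]; push_cast; linear_combination heq⟩
      · have hd12 : d1 = 1 ∧ d2 = 1 := by
          rcases hcases with h | h | h
          · exact absurd (h.2 ▸ hE) (by decide)
          · exact absurd (h.2 ▸ hE) (by decide)
          · exact h
        obtain ⟨u, v, w, hu, hv, hw, heq⟩ := base2 he d3 hE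
        exact ⟨v, w, u, hv, hw, hu, by rw [hd12.1, hd12.2]; push_cast; linear_combination heq⟩
    · rcases hcases with ⟨hA, hB⟩ | ⟨hA, hB⟩ | ⟨hA, hB⟩
      · obtain ⟨u, v, w, hu, hv, hw, heq⟩ := baseodd hpp hp2 he d1
        exact ⟨u, v, w, hu, hv, hw, by rw [hA, hB]; push_cast; linear_combination heq⟩
      · obtain ⟨u, v, w, hu, hv, hw, heq⟩ := baseodd hpp hp2 he d2
        exact ⟨v, u, w, hv, hu, hw, by rw [hA, hB]; push_cast; linear_combination heq⟩
      · obtain ⟨u, v, w, hu, hv, hw, heq⟩ := baseodd hpp hp2 he d3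
        exact ⟨v, w, u, hv, hw, hu, by rw [hA, hB]; push_cast; linear_combination heq⟩
  | coprime A B hA hB hAB ihA ihB =>
    intro _ d1 d2 d3 h1 h2 h3 c12 c13 c23 hev
    have hA0 : 0 < A := by omega
    have hB0 : 0 < B := by omega
    haveI : NeZero A := ⟨hA0.ne'⟩
    haveI : NeZero B := ⟨hB0.ne'⟩
    set e1 := Nat.gcd d1 A with he1
    set e2 := Nat.gcd d2 A with he2
    set e3 := Nat.gcd d3 A with he3
    set f1 := Nat.gcd d1 B with hf1
    set f2 := Nat.gcd d2 B with hf2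
    set f3 := Nat.gcd d3 B with hf3
    have hd1 : e1 * f1 = d1 := (Nat.gcd_mul_gcd_eq_iff_dvd_mul_of_coprime hAB).mpr h1
    have hd2 : e2 * f2 = d2 := (Nat.gcd_mul_gcd_eq_iff_dvd_mul_of_coprime hAB).mpr h2
    have hd3 : e3 * f3 = d3 := (Nat.gcd_mul_gcd_eq_iff_dvd_mul_of_coprime hAB).mpr h3
    -- coprimality of the e's and f's
    have ce12 : Nat.Coprime e1 e2 :=
      (c12.coprime_dvd_left (Nat.gcd_dvd_left d1 A)).coprime_dvd_right (Nat.gcd_dvd_left d2 A)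
    have ce13 : Nat.Coprime e1 e3 :=
      (c13.coprime_dvd_left (Nat.gcd_dvd_left d1 A)).coprime_dvd_right (Nat.gcd_dvd_left d3 A)
    have ce23 : Nat.Coprime e2 e3 :=
      (c23.coprime_dvd_left (Nat.gcd_dvd_left d2 A)).coprime_dvd_right (Nat.gcd_dvd_left d3 A)
    have cf12 : Nat.Coprime f1 f2 :=
      (c12.coprime_dvd_left (Nat.gcd_dvd_left d1 B)).coprime_dvd_right (Nat.gcd_dvd_left d2 B)
    have cf13 : Nat.Coprime f1 f3 :=
      (c13.coprime_dvd_left (Nat.gcd_dvd_left d1 B)).coprime_dvd_right (Nat.gcd_dvd_left d3 B)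
    have cf23 : Nat.Coprime f2 f3 :=
      (c23.coprime_dvd_left (Nat.gcd_dvd_left d2 B)).coprime_dvd_right (Nat.gcd_dvd_left d3 B)
    -- even hypotheses
    have hevA : Even A → Even e1 ∨ Even e2 ∨ Even e3 := by
      intro hEA
      have hEM : Even (A * B) := hEA.mul_right B
      rcases hev hEM with hE | hE | hE
      · exact Or.inl ((even_iff_two_dvd).mpr (Nat.dvd_gcd hE.two_dvd hEA.two_dvd))
      · exact Or.inr (Or.inl ((even_iff_two_dvd).mpr (Nat.dvd_gcd hE.two_dvd hEA.two_dvd)))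
      · exact Or.inr (Or.inr ((even_iff_two_dvd).mpr (Nat.dvd_gcd hE.two_dvd hEA.two_dvd)))
    have hevB : Even B → Even f1 ∨ Even f2 ∨ Even f3 := by
      intro hEB
      have hEM : Even (A * B) := hEB.mul_left A
      rcases hev hEM with hE | hE | hE
      · exact Or.inl ((even_iff_two_dvd).mpr (Nat.dvd_gcd hE.two_dvd hEB.two_dvd))
      · exact Or.inr (Or.inl ((even_iff_two_dvd).mpr (Nat.dvd_gcd hE.two_dvd hEB.two_dvd)))
      · exact Or.inr (Or.inr ((even_iff_two_dvd).mpr (Nat.dvd_gcd hE.two_dvd hEB.two_dvd)))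
    obtain ⟨uA, vA, wA, huA, hvA, hwA, heqA⟩ :=
      ihA hA0 e1 e2 e3 (Nat.gcd_dvd_right d1 A) (Nat.gcd_dvd_right d2 A)
        (Nat.gcd_dvd_right d3 A) ce12 ce13 ce23 hevA
    obtain ⟨uB, vB, wB, huB, hvB, hwB, heqB⟩ :=
      ihB hB0 f1 f2 f3 (Nat.gcd_dvd_right d1 B) (Nat.gcd_dvd_right d2 B)
        (Nat.gcd_dvd_right d3 B) cf12 cf13 cf23 hevB
    -- the f's are units mod A, the e's are units mod B
    have hf1A : IsUnit ((f1 : ℕ) : ZMod A) :=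
      (ZMod.isUnit_iff_coprime f1 A).mpr (hAB.symm.coprime_dvd_left (Nat.gcd_dvd_right d1 B))
    have hf2A : IsUnit ((f2 : ℕ) : ZMod A) :=
      (ZMod.isUnit_iff_coprime f2 A).mpr (hAB.symm.coprime_dvd_left (Nat.gcd_dvd_right d2 B))
    have hf3A : IsUnit ((f3 : ℕ) : ZMod A) :=
      (ZMod.isUnit_iff_coprime f3 A).mpr (hAB.symm.coprime_dvd_left (Nat.gcd_dvd_right d3 B))
    have he1B : IsUnit ((e1 : ℕ) : ZMod B) :=
      (ZMod.isUnit_iff_coprime e1 B).mpr (hAB.coprime_dvd_left (Nat.gcd_dvd_right d1 A))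
    have he2B : IsUnit ((e2 : ℕ) : ZMod B) :=
      (ZMod.isUnit_iff_coprime e2 B).mpr (hAB.coprime_dvd_left (Nat.gcd_dvd_right d2 A))
    have he3B : IsUnit ((e3 : ℕ) : ZMod B) :=
      (ZMod.isUnit_iff_coprime e3 B).mpr (hAB.coprime_dvd_left (Nat.gcd_dvd_right d3 A))
    set χ := ZMod.chineseRemainder hAB with hχ
    set x1 : ZMod A := ↑(hf1A.unit)⁻¹ * uA with hx1
    set x2 : ZMod A := ↑(hf2A.unit)⁻¹ * vA with hx2
    set x3 : ZMod A := ↑(hf3A.unit)⁻¹ * wA with hx3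
    set y1 : ZMod B := ↑(he1B.unit)⁻¹ * uB with hy1
    set y2 : ZMod B := ↑(he2B.unit)⁻¹ * vB with hy2
    set y3 : ZMod B := ↑(he3B.unit)⁻¹ * wB with hy3
    refine ⟨χ.symm (x1, y1), χ.symm (x2, y2), χ.symm (x3, y3), ?_, ?_, ?_, ?_⟩
    · exact ((isUnit_pair ((hf1A.unit⁻¹).isUnit.mul huA) ((he1B.unit⁻¹).isUnit.mul huB)).map
        χ.symm.toRingHom)
    · exact ((isUnit_pair ((hf2A.unit⁻¹).isUnit.mul hvA) ((he2B.unit⁻¹).isUnit.mul hvB)).map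
        χ.symm.toRingHom)
    · exact ((isUnit_pair ((hf3A.unit⁻¹).isUnit.mul hwA) ((he3B.unit⁻¹).isUnit.mul hwB)).map
        χ.symm.toRingHom)
    · apply χ.injective
      rw [map_add, map_add, map_mul, map_mul, map_mul, map_natCast, map_natCast, map_natCast,
        RingEquiv.apply_symm_apply, RingEquiv.apply_symm_apply, RingEquiv.apply_symm_apply,
        map_zero]
      have hinv1A : (f1 : ZMod A) * ↑(hf1A.unit)⁻¹ = 1 := hf1A.mul_val_inv
      have hinv2A : (f2 : ZMod A) * ↑(hf2A.unit)⁻¹ = 1 := hf2A.mul_val_inv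
      have hinv3A : (f3 : ZMod A) * ↑(hf3A.unit)⁻¹ = 1 := hf3A.mul_val_inv
      have hinv1B : (e1 : ZMod B) * ↑(he1B.unit)⁻¹ = 1 := he1B.mul_val_inv
      have hinv2B : (e2 : ZMod B) * ↑(he2B.unit)⁻¹ = 1 := he2B.mul_val_inv
      have hinv3B : (e3 : ZMod B) * ↑(he3B.unit)⁻¹ = 1 := he3B.mul_val_inv
      have hc1A : (d1 : ZMod A) = (e1 : ZMod A) * (f1 : ZMod A) := by
        rw [← hd1]; push_cast; ring
      have hc2A : (d2 : ZMod A) = (e2 : ZMod A) * (f2 : ZMod A) := by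
        rw [← hd2]; push_cast; ring
      have hc3A : (d3 : ZMod A) = (e3 : ZMod A) * (f3 : ZMod A) := by
        rw [← hd3]; push_cast; ring
      have hc1B : (d1 : ZMod B) = (e1 : ZMod B) * (f1 : ZMod B) := by
        rw [← hd1]; push_cast; ring
      have hc2B : (d2 : ZMod B) = (e2 : ZMod B) * (f2 : ZMod B) := by
        rw [← hd2]; push_cast; ring
      have hc3B : (d3 : ZMod B) = (e3 : ZMod B) * (f3 : ZMod B) := by
        rw [← hd3]; push_cast; ring
      apply Prod.ext
      · simp only [Prod.fst_add, Prod.fst_mul, Prod.fst_natCast, Prod.fst_zero]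
        rw [hc1A, hc2A, hc3A, hx1, hx2, hx3]
        linear_combination heqA + (e1 : ZMod A) * uA * hinv1A + (e2 : ZMod A) * vA * hinv2A
          + (e3 : ZMod A) * wA * hinv3A
      · simp only [Prod.snd_add, Prod.snd_mul, Prod.snd_natCast, Prod.snd_zero]
        rw [hc1B, hc2B, hc3B, hy1, hy2, hy3]
        linear_combination heqB + (f1 : ZMod B) * uB * hinv1B + (f2 : ZMod B) * vB * hinv2B
          + (f3 : ZMod B) * wB * hinv3B

theorem harvey_cyclic (N m n l : ℕ) (hN : 0 < N) (hm : m ∣ N) (hn : n ∣ N) (hl : l ∣ N) :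
    (∃ a b c : ZMod N, addOrderOf a = m ∧ addOrderOf b = n ∧ addOrderOf c = l ∧
        a + b + c = 0 ∧ AddSubgroup.closure {a, b, c} = ⊤) ↔
      (N = Nat.lcm m n ∧ N = Nat.lcm m l ∧ N = Nat.lcm n l ∧
        (Even N →
          ((Even (N / m) ∧ ¬ Even (N / n) ∧ ¬ Even (N / l)) ∨
           (¬ Even (N / m) ∧ Even (N / n) ∧ ¬ Even (N / l)) ∨
           (¬ Even (N / m) ∧ ¬ Even (N / n) ∧ Even (N / l))))) := by
  haveI : NeZero N := ⟨hN.ne'⟩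
  constructor
  · rintro ⟨a, b, c, hoa, hob, hoc, hsum, hclo⟩
    -- closure of each pair is everything
    have keyle : ∀ x y z : ZMod N, z = -(x + y) →
        AddSubgroup.closure {x, y, z} ≤ AddSubgroup.closure {x, y} := by
      intro x y z hz
      refine (AddSubgroup.closure_le _).mpr ?_
      intro t ht
      simp only [Set.mem_insert_iff, Set.mem_singleton_iff] at ht
      rcases ht with rfl | rfl | rfl
      · exact AddSubgroup.subset_closure (by simp)
      · exact AddSubgroup.subset_closure (by simp)
      · rw [hz]
        exact neg_mem (add_mem (AddSubgroup.subset_closure (by simp))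
          (AddSubgroup.subset_closure (by simp)))
    have hc' : c = -(a + b) := by linear_combination hsum
    have hb' : b = -(a + c) := by linear_combination hsum
    have ha' : a = -(b + c) := by linear_combination hsum
    have hset1 : ({a, b, c} : Set (ZMod N)) = {a, c, b} := by ext x; simp; tauto
    have hset2 : ({a, b, c} : Set (ZMod N)) = {b, c, a} := by ext x; simp; tauto
    have hab : AddSubgroup.closure {a, b} = ⊤ :=
      top_le_iff.mp (hclo ▸ keyle a b c hc')
    have hac : AddSubgroup.closure {a, c} = ⊤ := by
      have := keyle a c b hb'
      rw [← hset1, hclo] at this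
      exact top_le_iff.mp this
    have hbc : AddSubgroup.closure {b, c} = ⊤ := by
      have := keyle b c a ha'
      rw [← hset2, hclo] at this
      exact top_le_iff.mp this
    -- gcd with N of the values
    have hga : Nat.gcd N a.val = N / m := by rw [gcd_val_eq, hoa]
    have hgb : Nat.gcd N b.val = N / n := by rw [gcd_val_eq, hob]
    have hgc : Nat.gcd N c.val = N / l := by rw [gcd_val_eq, hoc]
    -- pairwise coprimality of the cofactors
    have copr : ∀ x y : ZMod N, AddSubgroup.closure {x, y} = ⊤ →
        Nat.Coprime (Nat.gcd N x.val) (Nat.gcd N y.val) := by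
      intro x y hxy
      have h1 := (closure_pair_top x y).mp hxy
      have hdvd : Nat.gcd (Nat.gcd N x.val) (Nat.gcd N y.val) ∣
          Nat.gcd N (Nat.gcd x.val y.val) := by
        apply Nat.dvd_gcd
        · exact (Nat.gcd_dvd_left _ _).trans (Nat.gcd_dvd_left _ _)
        · exact Nat.dvd_gcd ((Nat.gcd_dvd_left _ _).trans (Nat.gcd_dvd_right _ _))
            ((Nat.gcd_dvd_right _ _).trans (Nat.gcd_dvd_right _ _))
      rw [h1] at hdvd
      exact Nat.dvd_one.mp hdvd
    have c12 : Nat.Coprime (N / m) (N / n) := hga ▸ hgb ▸ copr a b hab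
    have c13 : Nat.Coprime (N / m) (N / l) := hga ▸ hgc ▸ copr a c hac
    have c23 : Nat.Coprime (N / n) (N / l) := hgb ▸ hgc ▸ copr b c hbc
    -- m n l divide N
    refine ⟨(lcm_eq_iff' hN hm hn).mpr c12, (lcm_eq_iff' hN hm hl).mpr c13,
      (lcm_eq_iff' hN hn hl).mpr c23, ?_⟩
    intro hEN
    -- the sum of values is divisible by N
    have hdvdsum : N ∣ a.val + b.val + c.val := by
      rw [← ZMod.natCast_eq_zero_iff]
      push_cast
      rw [ZMod.natCast_zmod_val, ZMod.natCast_zmod_val, ZMod.natCast_zmod_val]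
      exact hsum
    have hEsum : Even (a.val + b.val + c.val) :=
      even_iff_two_dvd.mpr (hEN.two_dvd.trans hdvdsum)
    -- parity correspondence
    have hpar : ∀ x : ZMod N, ¬ Even (Nat.gcd N x.val) → ¬ Even x.val := by
      intro x hx hx2
      exact hx (even_iff_two_dvd.mpr (Nat.dvd_gcd hEN.two_dvd hx2.two_dvd))
    have hpar2 : ∀ x : ZMod N, Even (Nat.gcd N x.val) → Even x.val := by
      intro x hx
      exact even_iff_two_dvd.mpr (hx.two_dvd.trans (Nat.gcd_dvd_right _ _))
    -- at least one of the cofactors is even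
    have hone : Even (N / m) ∨ Even (N / n) ∨ Even (N / l) := by
      by_contra hcon
      push_neg at hcon
      have h1 := hpar a (hga ▸ hcon.1)
      have h2 := hpar b (hgb ▸ hcon.2.1)
      have h3 := hpar c (hgc ▸ hcon.2.2)
      rw [Nat.even_iff] at hEsum
      rw [Nat.even_iff] at h1 h2 h3
      omega
    have hnot : ∀ x y : ℕ, Nat.Coprime x y → Even x → ¬ Even y := by
      intro x y hc hx hy
      have h2 : 2 ∣ Nat.gcd x y := Nat.dvd_gcd hx.two_dvd hy.two_dvd
      have hg : Nat.gcd x y = 1 := hc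
      rw [hg] at h2
      omega
    rcases hone with hE | hE | hE
    · exact Or.inl ⟨hE, hnot _ _ c12 hE, hnot _ _ c13 hE⟩
    · exact Or.inr (Or.inl ⟨hnot _ _ c12.symm hE, hE, hnot _ _ c23 hE⟩)
    · exact Or.inr (Or.inr ⟨hnot _ _ c13.symm hE, hnot _ _ c23.symm hE, hE⟩)
  · rintro ⟨h12, h13, h23, hev⟩
    have c12 : Nat.Coprime (N / m) (N / n) := (lcm_eq_iff' hN hm hn).mp h12
    have c13 : Nat.Coprime (N / m) (N / l) := (lcm_eq_iff' hN hm hl).mp h13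
    have c23 : Nat.Coprime (N / n) (N / l) := (lcm_eq_iff' hN hn hl).mp h23
    have hd1 : N / m ∣ N := Nat.div_dvd_of_dvd hm
    have hd2 : N / n ∣ N := Nat.div_dvd_of_dvd hn
    have hd3 : N / l ∣ N := Nat.div_dvd_of_dvd hl
    have hev' : Even N → Even (N / m) ∨ Even (N / n) ∨ Even (N / l) := by
      intro hEN
      rcases hev hEN with h | h | h
      · exact Or.inl h.1
      · exact Or.inr (Or.inl h.2.1)
      · exact Or.inr (Or.inr h.2.2)
    obtain ⟨u, v, w, hu, hv, hw, heq⟩ :=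
      core_units N hN (N / m) (N / n) (N / l) hd1 hd2 hd3 c12 c13 c23 hev'
    refine ⟨(↑(N / m) : ZMod N) * u, (↑(N / n) : ZMod N) * v, (↑(N / l) : ZMod N) * w,
      ?_, ?_, ?_, heq, ?_⟩
    · rw [addOrderOf_mul_unit _ _ hu, ZMod.addOrderOf_coe _ hN.ne',
        Nat.gcd_eq_right hd1, Nat.div_div_self hm hN.ne']
    · rw [addOrderOf_mul_unit _ _ hv, ZMod.addOrderOf_coe _ hN.ne',
        Nat.gcd_eq_right hd2, Nat.div_div_self hn hN.ne']
    · rw [addOrderOf_mul_unit _ _ hw, ZMod.addOrderOf_coe _ hN.ne',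
        Nat.gcd_eq_right hd3, Nat.div_div_self hl hN.ne']
    · -- closure is everything
      set a : ZMod N := (↑(N / m) : ZMod N) * u with hadef
      set b : ZMod N := (↑(N / n) : ZMod N) * v with hbdef
      set c : ZMod N := (↑(N / l) : ZMod N) * w with hcdef
      have hoa : addOrderOf a = m := by
        rw [hadef, addOrderOf_mul_unit _ _ hu, ZMod.addOrderOf_coe _ hN.ne',
          Nat.gcd_eq_right hd1, Nat.div_div_self hm hN.ne']
      have hob : addOrderOf b = n := by
        rw [hbdef, addOrderOf_mul_unit _ _ hv, ZMod.addOrderOf_coe _ hN.ne',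
          Nat.gcd_eq_right hd2, Nat.div_div_self hn hN.ne']
      have hga : Nat.gcd N a.val = N / m := by rw [gcd_val_eq, hoa]
      have hgb : Nat.gcd N b.val = N / n := by rw [gcd_val_eq, hob]
      have htop : AddSubgroup.closure {a, b} = ⊤ := by
        rw [closure_pair_top]
        have hdvd : Nat.gcd N (Nat.gcd a.val b.val) ∣ Nat.gcd (N / m) (N / n) := by
          apply Nat.dvd_gcd
          · rw [← hga]
            exact Nat.dvd_gcd (Nat.gcd_dvd_left _ _)
              ((Nat.gcd_dvd_right _ _).trans (Nat.gcd_dvd_left _ _))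
          · rw [← hgb]
            exact Nat.dvd_gcd (Nat.gcd_dvd_left _ _)
              ((Nat.gcd_dvd_right _ _).trans (Nat.gcd_dvd_right _ _))
        have hc : Nat.gcd (N / m) (N / n) = 1 := c12
        rw [hc] at hdvd
        exact Nat.dvd_one.mp hdvd
      rw [eq_top_iff, ← htop]
      apply AddSubgroup.closure_mono
      intro t ht
      simp only [Set.mem_insert_iff, Set.mem_singleton_iff] at ht ⊢
      tauto
end

section
/- Let g' ≥ 0, k' ≥ 1, r ≥ 0 be integers, m₁,…,m_r ≥ 2 integers, s ≥ 0 an even integer, and ε ∈ {1, 2}, and suppose μ = ε·g' + k' - 2 + Σᵢ(1 - 1/mᵢ) + s/4 satisfies 0 < μ < 1. Then (ε·g' + k' - 2) ∈ {-1, 0}; if ε·g' + k' - 2 = 0 then r ≤ 1, with (r, s) ∈ {(0, 2), (1, 0)}; and if ε·g' + k' - 2 = -1 then r ≤ 3, with: r = 0 forcing s = 6; r = 1 forcing s ∈ {2, 4}; r = 2 forcing s ∈ {0, 2} and, when s = 2, 1/m₁ + 1/m₂ > 1/2; and r = 3 forcing s = 0 and 1/m₁ + 1/m₂ + 1/m₃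 > 1. -/
/-!
Every period `m ≥ 2` contributes `1 - 1/m ∈ [1/2, 1)` to `μ`, and the integer part
`t = ε g' + k' - 2` is at least `-1` because `k' ≥ 1`. Hence `0 < μ < 1` forces `t ∈ {-1, 0}`,
leaves room for fewer than `2(1 - t)` periods, and for each number of periods pins the even
number `s` down to the few values compatible with `t + Σ (1 - 1/mᵢ) + s/4 ∈ (0, 1)`.
-/

open Finset

lemma one_div_pos_and_le_half {n : ℕ} (hn : 2 ≤ n) : 0 < 1 / (n : ℚ) ∧ 1 / (n : ℚ) ≤ 1 / 2 := by
  have h : (2 : ℚ) ≤ n := by exact_mod_cast hn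
  exact ⟨by positivity, one_div_le_one_div_of_le (by norm_num) h⟩

section Periods

variable {m : ℕ → ℕ} {r s : ℕ}

lemma card_div_two_le_sum_one_sub_one_div (hm : ∀ i < r, 2 ≤ m i) :
    (r : ℚ) / 2 ≤ ∑ i ∈ range r, (1 - 1 / (m i : ℚ)) := by
  calc (r : ℚ) / 2 = ∑ _i ∈ range r, (1 / 2 : ℚ) := by simp; ring
    _ ≤ _ := sum_le_sum fun i hi => by
      linarith [(one_div_pos_and_le_half (hm i (mem_range.mp hi))).2]

lemma periods_and_links_of_sum_mem_Ioo_zero_one (hm : ∀ i < r, 2 ≤ m i) (hs : Even s)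
    (hpos : 0 < ∑ i ∈ range r, (1 - 1 / (m i : ℚ)) + s / 4)
    (hlt : ∑ i ∈ range r, (1 - 1 / (m i : ℚ)) + s / 4 < 1) :
    (r = 0 ∧ s = 2) ∨ (r = 1 ∧ s = 0) := by
  have hsum := card_div_two_le_sum_one_sub_one_div hm
  have hs4 : (0 : ℚ) ≤ s / 4 := by positivity
  have hr : r < 2 := by exact_mod_cast (by linarith : (r : ℚ) < 2)
  obtain ⟨c, rfl⟩ := hs
  interval_cases r
  · simp only [range_zero, sum_empty, zero_add] at hpos hlt
    have : c + c < 4 := by exact_mod_cast (by linarith : ((c + c : ℕ) : ℚ) < 4)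
    have : 0 < c + c := by exact_mod_cast (by linarith : (0 : ℚ) < (c + c : ℕ))
    omega
  · simp only [sum_range_one] at hlt
    have := (one_div_pos_and_le_half (hm 0 one_pos)).2
    have : c + c < 2 := by exact_mod_cast (by linarith : ((c + c : ℕ) : ℚ) < 2)
    omega

lemma periods_and_links_of_sum_mem_Ioo_one_two (hm : ∀ i < r, 2 ≤ m i) (hs : Even s)
    (hgt : 1 < ∑ i ∈ range r, (1 - 1 / (m i : ℚ)) + s / 4)
    (hlt : ∑ i ∈ range r, (1 - 1 / (m i : ℚ)) + s / 4 < 2) :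
    r ≤ 3 ∧
      (r = 0 → s = 6) ∧
      (r = 1 → s = 2 ∨ s = 4) ∧
      (r = 2 → (s = 0 ∨ s = 2) ∧ (s = 2 → 1 / (m 0 : ℚ) + 1 / (m 1 : ℚ) > 1 / 2)) ∧
      (r = 3 → s = 0 ∧ 1 / (m 0 : ℚ) + 1 / (m 1 : ℚ) + 1 / (m 2 : ℚ) > 1) := by
  have hsum := card_div_two_le_sum_one_sub_one_div hm
  have hs4 : (0 : ℚ) ≤ s / 4 := by positivity
  have hr : r < 4 := by exact_mod_cast (by linarith : (r : ℚ) < 4)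
  obtain ⟨c, rfl⟩ := hs
  refine ⟨by omega, ?_, ?_, ?_, ?_⟩ <;> rintro rfl
  · simp only [range_zero, sum_empty, zero_add] at hgt hlt
    have : c + c < 8 := by exact_mod_cast (by linarith : ((c + c : ℕ) : ℚ) < 8)
    have : 4 < c + c := by exact_mod_cast (by linarith : (4 : ℚ) < (c + c : ℕ))
    omega
  · simp only [sum_range_one] at hgt hlt
    obtain ⟨h0pos, h0le⟩ := one_div_pos_and_le_half (hm 0 (by norm_num))
    have : c + c < 6 := by exact_mod_cast (by linarith : ((c + c : ℕ) : ℚ) < 6)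
    have : 0 < c + c := by exact_mod_cast (by linarith : (0 : ℚ) < (c + c : ℕ))
    omega
  · simp only [sum_range_succ, sum_range_zero, zero_add] at hgt hlt
    have h0 := (one_div_pos_and_le_half (hm 0 (by norm_num))).2
    have h1 := (one_div_pos_and_le_half (hm 1 (by norm_num))).2
    have : c + c < 4 := by exact_mod_cast (by linarith : ((c + c : ℕ) : ℚ) < 4)
    refine ⟨by omega, fun hs => ?_⟩
    rw [hs] at hlt
    push_cast at hlt
    linarith
  · simp only [sum_range_succ, sum_range_zero, zero_add] at hgt hlt
    have h0 := (one_div_pos_and_le_half (hm 0 (by norm_num))).2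
    have h1 := (one_div_pos_and_le_half (hm 1 (by norm_num))).2
    have h2 := (one_div_pos_and_le_half (hm 2 (by norm_num))).2
    have : c + c < 2 := by exact_mod_cast (by linarith : ((c + c : ℕ) : ℚ) < 2)
    have hs : c + c = 0 := by omega
    rw [hs] at hlt ⊢
    push_cast at hlt
    exact ⟨rfl, by linarith⟩

end Periods

theorem signature_area_classification_general (g' k' r s ε : ℕ) (m : ℕ → ℕ)
    (hk' : 1 ≤ k') (hm : ∀ i < r, 2 ≤ m i) (hs : Even s)
    (μ : ℚ)
    (hμ : μ = (ε : ℚ) * g' + k' - 2 + (∑ i ∈ Finset.range r, (1 - 1 / (m i : ℚ))) + s / 4)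
    (hpos : 0 < μ) (hlt : μ < 1) :
    ((ε : ℤ) * g' + k' - 2 = -1 ∨ (ε : ℤ) * g' + k' - 2 = 0) ∧
    ((ε : ℤ) * g' + k' - 2 = 0 → ((r = 0 ∧ s = 2) ∨ (r = 1 ∧ s = 0))) ∧
    ((ε : ℤ) * g' + k' - 2 = -1 →
      r ≤ 3 ∧
      (r = 0 → s = 6) ∧
      (r = 1 → s = 2 ∨ s = 4) ∧
      (r = 2 → (s = 0 ∨ s = 2) ∧ (s = 2 → 1 / (m 0 : ℚ) + 1 / (m 1 : ℚ) > 1 / 2)) ∧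
      (r = 3 → s = 0 ∧ 1 / (m 0 : ℚ) + 1 / (m 1 : ℚ) + 1 / (m 2 : ℚ) > 1)) := by
  set t : ℤ := (ε : ℤ) * g' + k' - 2 with ht
  have hμt : μ = t + (∑ i ∈ range r, (1 - 1 / (m i : ℚ)) + s / 4) := by
    rw [hμ, ht]; push_cast; ring
  have hrest : 0 ≤ ∑ i ∈ range r, (1 - 1 / (m i : ℚ)) + s / 4 := by
    have := card_div_two_le_sum_one_sub_one_div hm
    have : (0 : ℚ) ≤ r / 2 := by positivity
    have : (0 : ℚ) ≤ s / 4 := by positivity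
    linarith
  have ht_ge : -1 ≤ t := by
    have : (0 : ℤ) ≤ ε * g' := by positivity
    omega
  have ht_lt : t < 1 := by exact_mod_cast (by linarith : (t : ℚ) < 1)
  refine ⟨by omega, fun h0 => ?_, fun h1 => ?_⟩
  · rw [h0, Int.cast_zero, zero_add] at hμt
    exact periods_and_links_of_sum_mem_Ioo_zero_one hm hs (hμt ▸ hpos) (hμt ▸ hlt)
  · rw [h1] at hμt
    push_cast at hμt
    exact periods_and_links_of_sum_mem_Ioo_one_two hm hs (by linarith) (by linarith)

theorem signature_area_classification (g' k' r s ε : ℕ) (m : ℕ → ℕ)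
    (hk' : 1 ≤ k') (hm : ∀ i < r, 2 ≤ m i) (hs : Even s) (hε : ε = 1 ∨ ε = 2)
    (μ : ℚ)
    (hμ : μ = (ε : ℚ) * g' + k' - 2 + (∑ i ∈ Finset.range r, (1 - 1 / (m i : ℚ))) + s / 4)
    (hpos : 0 < μ) (hlt : μ < 1) :
    ((ε : ℤ) * g' + k' - 2 = -1 ∨ (ε : ℤ) * g' + k' - 2 = 0) ∧
    ((ε : ℤ) * g' + k' - 2 = 0 → ((r = 0 ∧ s = 2) ∨ (r = 1 ∧ s = 0))) ∧
    ((ε : ℤ) * g' + k' - 2 = -1 →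
      r ≤ 3 ∧
      (r = 0 → s = 6) ∧
      (r = 1 → s = 2 ∨ s = 4) ∧
      (r = 2 → (s = 0 ∨ s = 2) ∧ (s = 2 → 1 / (m 0 : ℚ) + 1 / (m 1 : ℚ) > 1 / 2)) ∧
      (r = 3 → s = 0 ∧ 1 / (m 0 : ℚ) + 1 / (m 1 : ℚ) + 1 / (m 2 : ℚ) > 1)) :=
  signature_area_classification_general g' k' r s ε m hk' hm hs μ hμ hpos hlt
end

section
/- Let N, m, n be positive integers with m, n dividing N and N = lcm(m, n), let t = gcd(m, n), and suppose ℤ/Nℤ is generated by elements a of order m and b of order n with a + b + c = 0 where c has order l and k = N/l. Then k divides t/gcd(t, N/t); moreover, if N is even and N/t is odd, then k is even. -/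
private lemma aux_not_dvd (N m n A B : ℕ) (hN : N ≠ 0) (hm0 : m ≠ 0) (hn0 : n ≠ 0)
    (hmN : m ∣ N) (hnN : n ∣ N)
    (hgA : Nat.gcd N A = N / m) (hgB : Nat.gcd N B = N / n)
    (hlcm : N = Nat.lcm m n) (p : ℕ) (hp : p.Prime)
    (hlt : m.factorization p < n.factorization p) : ¬ p ∣ (A + B + N) := by
  have hNm0 : N / m ≠ 0 := Nat.div_ne_zero_iff.2 ⟨hm0, Nat.le_of_dvd (Nat.pos_of_ne_zero hN) hmN⟩
  have hNn0 : N / n ≠ 0 := Nat.div_ne_zero_iff.2 ⟨hn0, Nat.le_of_dvd (Nat.pos_of_ne_zero hN) hnN⟩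
  have hν : N.factorization p = max (m.factorization p) (n.factorization p) := by
    rw [hlcm, Nat.factorization_lcm hm0 hn0, Finsupp.sup_apply]
  have hvm : (N / m).factorization p = N.factorization p - m.factorization p := by
    rw [Nat.factorization_div hmN]; rfl
  have hvn : (N / n).factorization p = N.factorization p - n.factorization p := by
    rw [Nat.factorization_div hnN]; rfl
  -- p ∣ N
  have hpN : p ∣ N := (Nat.Prime.dvd_iff_one_le_factorization hp hN).2 (by omega)
  -- p ∣ A
  have hpA : p ∣ A := by
    have h1 : p ∣ N / m :=
      (Nat.Prime.dvd_iff_one_le_factorization hp hNm0).2 (by omega)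
    exact (hgA ▸ h1).trans (Nat.gcd_dvd_right N A)
  -- ¬ p ∣ B
  have hpB : ¬ p ∣ B := by
    intro hB
    have h2 : p ∣ N / n := hgB ▸ Nat.dvd_gcd hpN hB
    have := (Nat.Prime.dvd_iff_one_le_factorization hp hNn0).1 h2
    omega
  intro hS
  exact hpB (by simpa using Nat.dvd_sub (Nat.dvd_sub hS hpN) hpA)

theorem k_divides_and_even (N m n t l k : ℕ) (hN : 0 < N) (hmN : m ∣ N) (hnN : n ∣ N)
    (hlcm : N = Nat.lcm m n) (ht : t = Nat.gcd m n)
    (a b : ZMod N) (ha : addOrderOf a = m) (hb : addOrderOf b = n)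
    (hgen : AddSubgroup.closure {a, b} = ⊤)
    (hl : l = addOrderOf (-(a + b))) (hk : k = N / l) :
    k ∣ t / Nat.gcd t (N / t) ∧ (Even N → Odd (N / t) → Even k) := by
  haveI : NeZero N := ⟨hN.ne'⟩
  have hN0 : N ≠ 0 := hN.ne'
  have hm0 : m ≠ 0 := by rw [← ha]; exact (addOrderOf_pos a).ne'
  have hn0 : n ≠ 0 := by rw [← hb]; exact (addOrderOf_pos b).ne'
  set A := a.val with hAdef
  set B := b.val with hBdef
  have haA : (A : ZMod N) = a := ZMod.natCast_rightInverse a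
  have hbB : (B : ZMod N) = b := ZMod.natCast_rightInverse b
  -- gcd facts
  have hgA : Nat.gcd N A = N / m := by
    have h := ZMod.addOrderOf_coe A hN0
    rw [haA, ha] at h
    rw [h, Nat.div_div_self (Nat.gcd_dvd_left N A) hN0]
  have hgB : Nat.gcd N B = N / n := by
    have h := ZMod.addOrderOf_coe B hN0
    rw [hbB, hb] at h
    rw [h, Nat.div_div_self (Nat.gcd_dvd_left N B) hN0]
  set S := A + B + N with hSdef
  have hS0 : S ≠ 0 := by omega
  have hgS : Nat.gcd N S = k := by
    have h := ZMod.addOrderOf_coe (A + B) hN0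
    rw [show ((A + B : ℕ) : ZMod N) = a + b by push_cast [haA, hbB]; ring] at h
    have hl' : l = N / Nat.gcd N (A + B) := by rw [hl, addOrderOf_neg, h]
    rw [hSdef, Nat.gcd_add_self_right, hk, hl',
      Nat.div_div_self (Nat.gcd_dvd_left N (A + B)) hN0]
  have hk0 : k ≠ 0 := by rw [← hgS]; exact Nat.gcd_ne_zero_left hN0
  have htm : t ∣ m := ht ▸ Nat.gcd_dvd_left m n
  have htN : t ∣ N := htm.trans hmN
  have ht0 : t ≠ 0 := fun h => hm0 (by simpa [h, ht] using (Nat.eq_zero_of_gcd_eq_zero_left (ht ▸ h))) 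
  have hNt0 : N / t ≠ 0 := Nat.div_ne_zero_iff.2 ⟨ht0, Nat.le_of_dvd hN htN⟩
  have hg0 : Nat.gcd t (N / t) ≠ 0 := Nat.gcd_ne_zero_left ht0
  have hT0 : t / Nat.gcd t (N / t) ≠ 0 :=
    Nat.div_ne_zero_iff.2 ⟨hg0, Nat.le_of_dvd (Nat.pos_of_ne_zero ht0) (Nat.gcd_dvd_left _ _)⟩
  -- N/m divides N/t
  have hdvd_mt : N / m ∣ N / t := by
    refine ⟨m / t, ?_⟩
    rw [Nat.div_mul_div_comm hmN htm, mul_comm N m, Nat.mul_div_mul_left _ _ (Nat.pos_of_ne_zero hm0)]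
  have hdvd_nt : N / n ∣ N / t := by
    have htn : t ∣ n := ht ▸ Nat.gcd_dvd_right m n
    refine ⟨n / t, ?_⟩
    rw [Nat.div_mul_div_comm hnN htn, mul_comm N n, Nat.mul_div_mul_left _ _ (Nat.pos_of_ne_zero hn0)]
  constructor
  · rw [← Nat.factorization_prime_le_iff_dvd hk0 hT0]
    intro p hp
    have hν : N.factorization p = max (m.factorization p) (n.factorization p) := by
      rw [hlcm, Nat.factorization_lcm hm0 hn0, Finsupp.sup_apply]
    have hvk : k.factorization p = min (N.factorization p) (S.factorization p) := by
      rw [← hgS, Nat.factorization_gcd hN0 hS0, Finsupp.inf_apply]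
    have hvt : t.factorization p = min (m.factorization p) (n.factorization p) := by
      rw [ht, Nat.factorization_gcd hm0 hn0, Finsupp.inf_apply]
    have hvNt : (N / t).factorization p = N.factorization p - t.factorization p := by
      rw [Nat.factorization_div htN]; rfl
    have hvg : (Nat.gcd t (N / t)).factorization p
        = min (t.factorization p) ((N / t).factorization p) := by
      rw [Nat.factorization_gcd ht0 hNt0, Finsupp.inf_apply]
    have hvT : (t / Nat.gcd t (N / t)).factorization p
        = t.factorization p - (Nat.gcd t (N / t)).factorization p := by
      rw [Nat.factorization_div (Nat.gcd_dvd_left _ _)]; rfl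
    rcases Nat.lt_trichotomy (m.factorization p) (n.factorization p) with hc | hc | hc
    · have := aux_not_dvd N m n A B hN0 hm0 hn0 hmN hnN hgA hgB hlcm p hp hc
      have hz : k.factorization p = 0 :=
        Nat.factorization_eq_zero_of_not_dvd (fun h => this (h.trans (hgS ▸ Nat.gcd_dvd_right N S)))
      omega
    · omega
    · have := aux_not_dvd N n m B A hN0 hn0 hm0 hnN hmN hgB hgA
        (by rw [hlcm, Nat.lcm_comm]) p hp hc
      rw [show B + A + N = S by omega] at this
      have hz : k.factorization p = 0 :=
        Nat.factorization_eq_zero_of_not_dvd (fun h => this (h.trans (hgS ▸ Nat.gcd_dvd_right N S)))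
      omega
  · intro hEN hONt
    rw [Nat.even_iff] at hEN ⊢
    rw [Nat.odd_iff] at hONt
    have h2N : 2 ∣ N := by omega
    have hNmodd : ¬ 2 ∣ N / m := fun h => by
      have := h.trans hdvd_mt; omega
    have hNnodd : ¬ 2 ∣ N / n := fun h => by
      have := h.trans hdvd_nt; omega
    have hAodd : ¬ 2 ∣ A := fun h => hNmodd (hgA ▸ Nat.dvd_gcd h2N h)
    have hBodd : ¬ 2 ∣ B := fun h => hNnodd (hgB ▸ Nat.dvd_gcd h2N h)
    have h2S : 2 ∣ S := by omega
    have : 2 ∣ k := hgS ▸ Nat.dvd_gcd h2N h2S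
    omega
end
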